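/- arXiv:1310.3569 — 2 statements merged into one kernel-verified Lean document; each statement's English description precedes it below -/
import Mathlib

section
/- Let k be a field of characteristic ≠ 2. Let R = k[x₁,y₁,x₂,y₂,x₃,y₃]/(yᵢ² − xᵢ(xᵢ²−1), i = 1,2,3), an integral domain, let K = Frac(R), and assume the images of all xᵢ, yᵢ are nonzero in K. Set bⱼ = xⱼ/x₁, aⱼ = yⱼ/y₁ for j = 2,3, and u₁ = x₁². Then for each j ∈ {2,3}: (i) u₁·(aⱼ² − bⱼ³) = aⱼ² − bⱼ in K; (ii) aⱼ² − bⱼ³ ≠ 0 in K; and consequently (iii) u₁ = (aⱼ² − bⱼ)/(aⱼ² − bⱼ³) in K. -/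
/-!
Write `(u, v) = (x₁, y₁)`, `(x, y) = (xⱼ, yⱼ)`, so `a = y/v`, `b = x/u`. Eliminating `v²` and `y²`
with the curve equation, both `u²(a² - b³)` and `a² - b` become `x(x² - u²)/v²`. This common
value is nonzero in `K` because `xⱼ(xⱼ² - x₁²)` does not vanish at some point of `Z`.
-/

open MvPolynomial

noncomputable section

/-- The ideal of `k[x₁,y₁,x₂,y₂,x₃,y₃]` generated by the three relations
`yᵢ² - xᵢ(xᵢ² - 1)`, `i = 1,2,3`.  Variables are indexed so that
`x₁ = X 0`, `y₁ = X 1`, `x₂ = X 2`, `y₂ = X 3`, `x₃ = X 4`, `y₃ = X 5`. -/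
def uenoIdeal (k : Type*) [Field k] : Ideal (MvPolynomial (Fin 6) k) :=
  Ideal.span { X 1 ^ 2 - X 0 * (X 0 ^ 2 - 1),
               X 3 ^ 2 - X 2 * (X 2 ^ 2 - 1),
               X 5 ^ 2 - X 4 * (X 4 ^ 2 - 1) }

variable (k : Type*) [Field k] [(uenoIdeal k).IsPrime]

/-- `R = k[x₁,y₁,x₂,y₂,x₃,y₃]/(yᵢ² - xᵢ(xᵢ² - 1), i = 1,2,3)`, the affine coordinate ring of
`Z = C₁ × C₂ × C₃`; it is an integral domain (the defining ideal being prime). -/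
abbrev UenoRing : Type _ := MvPolynomial (Fin 6) k ⧸ uenoIdeal k

/-- `K = Frac(R) = k(Z)`, the function field of `Z = C₁ × C₂ × C₃`. -/
abbrev UenoField : Type _ := FractionRing (UenoRing k)

/-- The image in `K = Frac(R)` of the `i`-th variable. -/
def xv (i : Fin 6) : UenoField k :=
  algebraMap (UenoRing k) (UenoField k) (Ideal.Quotient.mk (uenoIdeal k) (X i))

/-- `x₁` as an element of `K`. -/ def x1 : UenoField k := xv k 0
/-- `y₁` as an element of `K`. -/ def y1 : UenoField k := xv k 1
/-- `x₂` as an element of `K`. -/ def x2 : UenoField k := xv k 2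
/-- `y₂` as an element of `K`. -/ def y2 : UenoField k := xv k 3
/-- `x₃` as an element of `K`. -/ def x3 : UenoField k := xv k 4
/-- `y₃` as an element of `K`. -/ def y3 : UenoField k := xv k 5

/-- `b₂ = x₂/x₁`. -/ def b2 : UenoField k := x2 k / x1 k
/-- `b₃ = x₃/x₁`. -/ def b3 : UenoField k := x3 k / x1 k
/-- `a₂ = y₂/y₁`. -/ def a2 : UenoField k := y2 k / y1 k
/-- `a₃ = y₃/y₁`. -/ def a3 : UenoField k := y3 k / y1 k

section CurveRatios

variable {F : Type*} [Field F] {u v x y : F}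

lemma sq_sub_one_ne_zero_of_curve (hv : v ^ 2 = u * (u ^ 2 - 1)) (hv0 : v ≠ 0) :
    u ^ 2 - 1 ≠ 0 := by
  rintro h
  exact hv0 (pow_eq_zero_iff two_ne_zero |>.mp (by rw [hv, h, mul_zero]))

lemma ratio_sq_sub_ratio_eq (hv : v ^ 2 = u * (u ^ 2 - 1)) (hy : y ^ 2 = x * (x ^ 2 - 1))
    (hu0 : u ≠ 0) (hv0 : v ≠ 0) :
    (y / v) ^ 2 - x / u = x * (x ^ 2 - u ^ 2) / v ^ 2 := by
  have := sq_sub_one_ne_zero_of_curve hv hv0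
  rw [div_pow, hv, hy]
  field_simp
  ring

lemma sq_mul_ratio_sq_sub_ratio_cube (hv : v ^ 2 = u * (u ^ 2 - 1))
    (hy : y ^ 2 = x * (x ^ 2 - 1)) (hu0 : u ≠ 0) (hv0 : v ≠ 0) :
    u ^ 2 * ((y / v) ^ 2 - (x / u) ^ 3) = (y / v) ^ 2 - x / u := by
  have := sq_sub_one_ne_zero_of_curve hv hv0
  rw [div_pow, div_pow, hv, hy]
  field_simp
  ring

theorem sq_eq_ratio_of_curve (hv : v ^ 2 = u * (u ^ 2 - 1)) (hy : y ^ 2 = x * (x ^ 2 - 1))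
    (hu0 : u ≠ 0) (hv0 : v ≠ 0) (hx : x * (x ^ 2 - u ^ 2) ≠ 0) :
    u ^ 2 * ((y / v) ^ 2 - (x / u) ^ 3) = (y / v) ^ 2 - x / u ∧
      (y / v) ^ 2 - (x / u) ^ 3 ≠ 0 ∧
      u ^ 2 = ((y / v) ^ 2 - x / u) / ((y / v) ^ 2 - (x / u) ^ 3) := by
  have key := sq_mul_ratio_sq_sub_ratio_cube hv hy hu0 hv0
  have hne : (y / v) ^ 2 - x / u ≠ 0 := by
    rw [ratio_sq_sub_ratio_eq hv hy hu0 hv0]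
    exact div_ne_zero hx (pow_ne_zero 2 hv0)
  have hden : (y / v) ^ 2 - (x / u) ^ 3 ≠ 0 := by
    rintro h
    rw [h, mul_zero] at key
    exact hne key.symm
  exact ⟨key, hden, (eq_div_iff hden).mpr key⟩

end CurveRatios

lemma algebraMap_mk_ne_zero_of_le_ker {A B : Type*} [CommRing A] [CommRing B] {I : Ideal A}
    [I.IsPrime] (f : A →+* B) (hI : I ≤ RingHom.ker f) {p : A} (hp : f p ≠ 0) :
    algebraMap (A ⧸ I) (FractionRing (A ⧸ I)) (Ideal.Quotient.mk I p) ≠ 0 := by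
  rw [ne_eq, IsFractionRing.to_map_eq_zero_iff, Ideal.Quotient.eq_zero_iff_mem]
  exact fun hpI => hp (hI hpI)

lemma uenoIdeal_le_ker_eval {F : Type*} [Field F] {w : Fin 6 → F}
    (h1 : w 1 ^ 2 = w 0 * (w 0 ^ 2 - 1)) (h2 : w 3 ^ 2 = w 2 * (w 2 ^ 2 - 1))
    (h3 : w 5 ^ 2 = w 4 * (w 4 ^ 2 - 1)) :
    uenoIdeal F ≤ RingHom.ker (eval w) := by
  rw [uenoIdeal, Ideal.span_le]
  rintro q (rfl | rfl | rfl) <;> simp [h1, h2, h3]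

lemma xv_sq_eq (F : Type*) [Field F] {i j : Fin 6}
    (h : X j ^ 2 - X i * (X i ^ 2 - 1) ∈ uenoIdeal F) :
    xv F j ^ 2 = xv F i * (xv F i ^ 2 - 1) := by
  have := congrArg (algebraMap (UenoRing F) (UenoField F)) (Ideal.Quotient.eq_zero_iff_mem.mpr h)
  rw [← sub_eq_zero]
  simpa [xv] using this

/-- The polynomial takes the value `1` at the point `x₁ = 0, x₂ = x₃ = 1, yᵢ = 0` of `Z`. -/
lemma xv_mul_sq_sub_sq_ne_zero {j : Fin 6} (hj : j = 2 ∨ j = 4) :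
    xv k j * (xv k j ^ 2 - xv k 0 ^ 2) ≠ 0 := by
  have hZ : uenoIdeal k ≤ RingHom.ker (eval ![(0 : k), 0, 1, 0, 1, 0]) :=
    uenoIdeal_le_ker_eval (by simp) (by simp) (by simp)
  have := algebraMap_mk_ne_zero_of_le_ker _ hZ
    (p := X j * (X j ^ 2 - X 0 ^ 2)) (by rcases hj with rfl | rfl <;> simp)
  simpa [xv] using this

theorem u1_eq (hne : ∀ i : Fin 6, xv k i ≠ 0) :
    (x1 k ^ 2 * (a2 k ^ 2 - b2 k ^ 3) = a2 k ^ 2 - b2 k ∧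
      a2 k ^ 2 - b2 k ^ 3 ≠ 0 ∧
      x1 k ^ 2 = (a2 k ^ 2 - b2 k) / (a2 k ^ 2 - b2 k ^ 3)) ∧
    (x1 k ^ 2 * (a3 k ^ 2 - b3 k ^ 3) = a3 k ^ 2 - b3 k ∧
      a3 k ^ 2 - b3 k ^ 3 ≠ 0 ∧
      x1 k ^ 2 = (a3 k ^ 2 - b3 k) / (a3 k ^ 2 - b3 k ^ 3)) := by
  have r1 : y1 k ^ 2 = x1 k * (x1 k ^ 2 - 1) := xv_sq_eq k (Ideal.subset_span (by simp))
  have r2 : y2 k ^ 2 = x2 k * (x2 k ^ 2 - 1) := xv_sq_eq k (Ideal.subset_span (by simp))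
  have r3 : y3 k ^ 2 = x3 k * (x3 k ^ 2 - 1) := xv_sq_eq k (Ideal.subset_span (by simp))
  exact ⟨sq_eq_ratio_of_curve r1 r2 (hne 0) (hne 1) (xv_mul_sq_sub_sq_ne_zero k (.inl rfl)),
    sq_eq_ratio_of_curve r1 r3 (hne 0) (hne 1) (xv_mul_sq_sub_sq_ne_zero k (.inr rfl))⟩
end
end

section
/- Let k be a field of characteristic ≠ 2 containing an element ζ with ζ² = −1. Let R = k[x₁,y₁,x₂,y₂,x₃,y₃]/(yᵢ² − xᵢ(xᵢ²−1), i = 1,2,3), an integral domain, let K = Frac(R), and assume the images of all xᵢ, yᵢ are nonzero in K. Let g be the k-automorphism of K determined by g(xᵢ) = −xᵢ and g(yᵢ) = ζ·yᵢ for i = 1,2,3. Set b₂ = x₂/x₁, b₃ = x₃/x₁, a₂ = y₂/y₁, a₃ = y₃/y₁. Then the fixed field K^g = { f ∈ K : g(f) = f } equals the subfield k(b₂, b₃, a₂, a₃) of K generated over k by b₂, b₃, a₂, a₃. -/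
/-! The fixed field contains `F = k(b₂, b₃, a₂, a₃)`. Over `F` the curve equations give
`x₁² = (a₂² - b₂)/(a₂² - b₂³)` (this is `u₁` of the paper) and `x₁ = y₁²/(x₁² - 1)`, so
`K = F(y₁)` with `y₁⁴ = x₁²(x₁² - 1)² ∈ F`, whence `[K : F] ≤ 4`. Since `g` has order `4`,
Artin's theorem gives `[K : K^g] = 4`, and `F ⊆ K^g` forces `F = K^g`. -/

open MvPolynomial

noncomputable section

variable (k : Type*) [Field k] [(uenoIdeal k).IsPrime]

open IntermediateField Module

section General

variable {F E : Type*} [Field F] [Field E] [Algebra F E]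

theorem IntermediateField.mem_fixedField_zpowers_iff {σ : E ≃ₐ[F] E} {x : E} :
    x ∈ fixedField (Subgroup.zpowers σ) ↔ σ x = x := by
  rw [mem_fixedField_iff, Subgroup.forall_mem_zpowers]
  simpa only [MulAction.mem_fixedBy, AlgEquiv.smul_def] using
    MulAction.mem_fixedBy_zpowers_iff_mem_fixedBy (g := σ) (a := x)

theorem AlgEquiv.eq_one_of_adjoin_eq_top {s : Set E} (hs : adjoin F s = ⊤) {σ : E ≃ₐ[F] E}
    (h : ∀ x ∈ s, σ x = x) : σ = 1 := by
  have hfix : fixedField (Subgroup.zpowers σ) = ⊤ :=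
    top_le_iff.mp (hs ▸ adjoin_le_iff.mpr fun x hx ↦ mem_fixedField_zpowers_iff.mpr (h x hx))
  ext x
  exact mem_fixedField_zpowers_iff.mp (hfix ▸ mem_top)

theorem AlgEquiv.pow_apply_of_apply_eq_mul (σ : E ≃ₐ[F] E) {c : F} {x : E}
    (h : σ x = algebraMap F E c * x) (n : ℕ) : (σ ^ n) x = algebraMap F E c ^ n * x := by
  induction n with
  | zero => simp
  | succ n ih =>
    rw [pow_succ, AlgEquiv.mul_apply, h, map_mul, AlgEquiv.commutes, ih, pow_succ]
    ring

theorem IntermediateField.finrank_fixedField_zpowers {σ : E ≃ₐ[F] E} (hσ : IsOfFinOrder σ) :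
    finrank (fixedField (Subgroup.zpowers σ)) E = orderOf σ := by
  have : Finite (Subgroup.zpowers σ) := hσ.finite_zpowers
  have := Fintype.ofFinite (Subgroup.zpowers σ)
  rw [← Nat.card_zpowers, Nat.card_eq_fintype_card]
  exact FixedPoints.finrank_eq_card (Subgroup.zpowers σ) E

theorem IntermediateField.eq_fixedField_zpowers (K : IntermediateField F E) [FiniteDimensional K E]
    (σ : E ≃ₐ[F] E) (hK : K ≤ fixedField (Subgroup.zpowers σ)) (h : finrank K E ≤ orderOf σ) :
    K = fixedField (Subgroup.zpowers σ) := by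
  have hσ : IsOfFinOrder σ := orderOf_pos_iff.mp (finrank_pos.trans_le h)
  exact eq_of_le_of_finrank_le' hK (h.trans (finrank_fixedField_zpowers hσ).ge)

section PowEqAlgebraMap

variable {α : E} {n : ℕ} {c : F} (hn : n ≠ 0) (hα : α ^ n = algebraMap F E c)
include hn hα

theorem IsIntegral.of_pow_eq_algebraMap : IsIntegral F α :=
  .of_pow (Nat.pos_of_ne_zero hn) (hα ▸ isIntegral_algebraMap)

theorem IntermediateField.finiteDimensional_of_adjoin_simple_eq_top (htop : F⟮α⟯ = ⊤) :
    FiniteDimensional F E := by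
  have := adjoin.finiteDimensional (IsIntegral.of_pow_eq_algebraMap hn hα)
  rw [htop] at this
  exact Module.Finite.equiv topEquiv.toLinearEquiv

theorem IntermediateField.finrank_le_of_adjoin_simple_eq_top (htop : F⟮α⟯ = ⊤) :
    finrank F E ≤ n := by
  have hint := IsIntegral.of_pow_eq_algebraMap hn hα
  have hroot : Polynomial.aeval α (Polynomial.X ^ n - Polynomial.C c) = 0 := by simp [hα]
  rw [← finrank_top', ← htop, adjoin.finrank hint]
  calc (minpoly F α).natDegree ≤ (Polynomial.X ^ n - Polynomial.C c).natDegree :=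
        Polynomial.natDegree_le_natDegree
          (minpoly.degree_le_of_ne_zero F α
            (Polynomial.X_pow_sub_C_ne_zero (Nat.pos_of_ne_zero hn) c) hroot)
    _ = n := Polynomial.natDegree_X_pow_sub_C

end PowEqAlgebraMap

theorem IsFractionRing.adjoin_image_eq_top {A : Type*} [CommRing A] [Algebra F A] [Algebra A E]
    [IsFractionRing A E] [IsScalarTower F A E] {s : Set A} (hs : Algebra.adjoin F s = ⊤) :
    adjoin F (algebraMap A E '' s) = ⊤ := by
  rw [← (AlgHom.id F E).fieldRange_eq_top.mpr Function.surjective_id]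
  refine (algHom_fieldRange_eq_of_comp_eq_of_range_eq (K := E) (f := AlgHom.id F E)
    (g := IsScalarTower.toAlgHom F A E) (by ext; rfl) ?_).symm
  rw [← Algebra.map_top, ← hs, AlgHom.map_adjoin]
  rfl

end General

namespace Ueno

section Relations

omit [(uenoIdeal k).IsPrime]

theorem xv_sq_of_mem {i j : Fin 6} (h : X j ^ 2 - X i * (X i ^ 2 - 1) ∈ uenoIdeal k) :
    xv k j ^ 2 = xv k i * (xv k i ^ 2 - 1) := by
  have := congrArg (algebraMap (UenoRing k) (UenoField k)) (Ideal.Quotient.eq_zero_iff_mem.mpr h)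
  simp only [map_sub, map_mul, map_pow, map_one, map_zero] at this
  rw [xv, xv]
  linear_combination this

theorem y1_sq : y1 k ^ 2 = x1 k * (x1 k ^ 2 - 1) :=
  xv_sq_of_mem k (Ideal.subset_span (Set.mem_insert _ _))

theorem y2_sq : y2 k ^ 2 = x2 k * (x2 k ^ 2 - 1) :=
  xv_sq_of_mem k (Ideal.subset_span (Set.mem_insert_of_mem _ (Set.mem_insert _ _)))

theorem y1_pow_four : y1 k ^ 4 = x1 k ^ 2 * (x1 k ^ 2 - 1) ^ 2 := by
  linear_combination (y1 k ^ 2 + x1 k * (x1 k ^ 2 - 1)) * y1_sq k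

theorem x2_sq_ne_x1_sq : x2 k ^ 2 ≠ x1 k ^ 2 := by
  intro h
  have hmem : X 2 ^ 2 - X 0 ^ 2 ∈ uenoIdeal k := by
    rw [← Ideal.Quotient.eq_zero_iff_mem]
    apply IsFractionRing.injective (UenoRing k) (UenoField k)
    simpa [x1, x2, xv, sub_eq_zero] using h
  -- `(x₁, y₁, x₂, y₂, x₃, y₃) = (0, 0, 1, 0, 1, 0)` is a point of `Z` where `x₂² ≠ x₁²`.
  have hker : uenoIdeal k ≤ RingHom.ker (aeval ![(0 : k), 0, 1, 0, 1, 0]) := by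
    rw [uenoIdeal, Ideal.span_le]
    rintro q (rfl | rfl | rfl) <;> simp
  simpa using hker hmem

end Relations

theorem adjoin_range_xv_eq_top : IntermediateField.adjoin k (Set.range (xv k)) = ⊤ := by
  have hgen : Algebra.adjoin k (Set.range fun i ↦ Ideal.Quotient.mk (uenoIdeal k) (X i)) = ⊤ := by
    rw [show (Set.range fun i ↦ Ideal.Quotient.mk (uenoIdeal k) (X i)) =
        Ideal.Quotient.mkₐ k (uenoIdeal k) '' Set.range X by rw [← Set.range_comp]; rfl,
      ← AlgHom.map_adjoin, adjoin_range_X, Algebra.map_top, AlgHom.range_eq_top]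
    exact Ideal.Quotient.mkₐ_surjective k _
  rw [← IsFractionRing.adjoin_image_eq_top hgen, ← Set.range_comp]
  rfl

variable {k}

theorem a2_sq_sub_b2 (hx1 : x1 k ≠ 0) (hy1 : y1 k ≠ 0) :
    a2 k ^ 2 - b2 k = x2 k * (x2 k ^ 2 - x1 k ^ 2) / y1 k ^ 2 := by
  rw [a2, b2, div_pow, y2_sq]
  field_simp
  linear_combination -x2 k * y1_sq k

theorem a2_sq_sub_b2_pow_three (hx1 : x1 k ≠ 0) (hy1 : y1 k ≠ 0) :
    a2 k ^ 2 - b2 k ^ 3 = x2 k * (x2 k ^ 2 - x1 k ^ 2) / (x1 k ^ 2 * y1 k ^ 2) := by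
  rw [a2, b2, div_pow, div_pow, y2_sq]
  field_simp
  linear_combination -x2 k ^ 3 * y1_sq k

theorem x1_sq_eq (hx1 : x1 k ≠ 0) (hy1 : y1 k ≠ 0) (hx2 : x2 k ≠ 0) :
    x1 k ^ 2 = (a2 k ^ 2 - b2 k) / (a2 k ^ 2 - b2 k ^ 3) := by
  have := sub_ne_zero.mpr (x2_sq_ne_x1_sq k)
  rw [a2_sq_sub_b2 hx1 hy1, a2_sq_sub_b2_pow_three hx1 hy1]
  field_simp

theorem adjoin_y1_eq_top (F : IntermediateField k (UenoField k)) (hb2 : b2 k ∈ F)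
    (hb3 : b3 k ∈ F) (ha2 : a2 k ∈ F) (ha3 : a3 k ∈ F) (hx1sq : x1 k ^ 2 ∈ F)
    (hx1 : x1 k ≠ 0) (hy1 : y1 k ≠ 0) : F⟮y1 k⟯ = ⊤ := by
  set L := F⟮y1 k⟯
  have hFL : ∀ z ∈ F, z ∈ L := fun z hz ↦ L.algebraMap_mem ⟨z, hz⟩
  have hy1L : y1 k ∈ L := mem_adjoin_simple_self F (y1 k)
  have hx1L : x1 k ∈ L := by
    have hsub : x1 k ^ 2 - 1 ≠ 0 := fun h ↦ hy1 (pow_eq_zero_iff two_ne_zero |>.mp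
      (by rw [y1_sq, h, mul_zero]))
    rw [show x1 k = y1 k ^ 2 / (x1 k ^ 2 - 1) by rw [eq_div_iff hsub, y1_sq]]
    exact div_mem (pow_mem hy1L 2) (sub_mem (hFL _ hx1sq) (one_mem L))
  have hmul : ∀ {c z w : UenoField k}, c ∈ F → z ∈ L → w = c * z → w ∈ L :=
    fun hc hz hw ↦ hw ▸ mul_mem (hFL _ hc) hz
  rw [eq_top_iff, ← adjoin_eq_top_of_adjoin_eq_top k (E := F) (adjoin_range_xv_eq_top k),
    adjoin_le_iff]
  rintro _ ⟨i, rfl⟩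
  fin_cases i
  · exact hx1L
  · exact hy1L
  · exact hmul hb2 hx1L (div_mul_cancel₀ (x2 k) hx1).symm
  · exact hmul ha2 hy1L (div_mul_cancel₀ (y2 k) hy1).symm
  · exact hmul hb3 hx1L (div_mul_cancel₀ (x3 k) hx1).symm
  · exact hmul ha3 hy1L (div_mul_cancel₀ (y3 k) hy1).symm

theorem orderOf_eq_four {ζ : k} (h2 : (2 : k) ≠ 0) (hζ : ζ ^ 2 = -1) (hy1 : y1 k ≠ 0)
    {g : UenoField k ≃ₐ[k] UenoField k}
    (hgx1 : g (x1 k) = -x1 k) (hgx2 : g (x2 k) = -x2 k) (hgx3 : g (x3 k) = -x3 k)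
    (hgy1 : g (y1 k) = algebraMap k (UenoField k) ζ * y1 k)
    (hgy2 : g (y2 k) = algebraMap k (UenoField k) ζ * y2 k)
    (hgy3 : g (y3 k) = algebraMap k (UenoField k) ζ * y3 k) : orderOf g = 4 := by
  have hneg : ∀ {x}, g x = -x → g x = algebraMap k (UenoField k) (-1) * x := fun h ↦ by
    rw [h, map_neg, map_one, neg_one_mul]
  have hfix : ∀ {c : k} {x}, c ^ 4 = 1 → g x = algebraMap k (UenoField k) c * x →
      (g ^ 4) x = x := fun hc h ↦ by
    rw [g.pow_apply_of_apply_eq_mul h, ← map_pow, hc, map_one, one_mul]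
  have hζ4 : ζ ^ 4 = 1 := by linear_combination (ζ ^ 2 - 1) * hζ
  have hg4 : g ^ 4 = 1 := AlgEquiv.eq_one_of_adjoin_eq_top (adjoin_range_xv_eq_top k) <| by
    rintro _ ⟨i, rfl⟩
    fin_cases i
    exacts [hfix (by norm_num) (hneg hgx1), hfix hζ4 hgy1, hfix (by norm_num) (hneg hgx2),
      hfix hζ4 hgy2, hfix (by norm_num) (hneg hgx3), hfix hζ4 hgy3]
  have hg2 : g ^ 2 ≠ 1 := fun h ↦ by
    have h2y1 := g.pow_apply_of_apply_eq_mul hgy1 2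
    rw [h, ← map_pow, hζ, map_neg, map_one, AlgEquiv.one_apply] at h2y1
    have : algebraMap k (UenoField k) 2 * y1 k = 0 := by
      rw [map_ofNat]
      linear_combination h2y1
    exact mul_ne_zero ((map_ne_zero _).mpr h2) hy1 this
  exact orderOf_eq_prime_pow (p := 2) (n := 1) (by simpa using hg2) (by simpa using hg4)

theorem adjoin_le_fixedField_zpowers {ζ : k} (hζ : ζ ^ 2 = -1)
    {g : UenoField k ≃ₐ[k] UenoField k}
    (hgx1 : g (x1 k) = -x1 k) (hgx2 : g (x2 k) = -x2 k) (hgx3 : g (x3 k) = -x3 k)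
    (hgy1 : g (y1 k) = algebraMap k (UenoField k) ζ * y1 k)
    (hgy2 : g (y2 k) = algebraMap k (UenoField k) ζ * y2 k)
    (hgy3 : g (y3 k) = algebraMap k (UenoField k) ζ * y3 k) :
    adjoin k ({b2 k, b3 k, a2 k, a3 k} : Set (UenoField k)) ≤
      fixedField (Subgroup.zpowers g) := by
  have hζ0 : algebraMap k (UenoField k) ζ ≠ 0 := (map_ne_zero _).mpr fun h ↦ by
    simp [h] at hζ
  rw [adjoin_le_iff]
  rintro _ (rfl | rfl | rfl | rfl) <;> rw [SetLike.mem_coe, mem_fixedField_zpowers_iff]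
  · rw [b2, map_div₀, hgx2, hgx1, neg_div_neg_eq]
  · rw [b3, map_div₀, hgx3, hgx1, neg_div_neg_eq]
  · rw [a2, map_div₀, hgy2, hgy1, mul_div_mul_left _ _ hζ0]
  · rw [a3, map_div₀, hgy3, hgy1, mul_div_mul_left _ _ hζ0]

end Ueno

set_option synthInstance.maxHeartbeats 1000000 in
/-- **Proposition 2.4**: let `g` be the `k`-automorphism of `K = k(Z)` with `g(xᵢ) = -xᵢ`,
`g(yᵢ) = ζyᵢ` (`ζ² = -1`).  Then the fixed field `K^g` (the function field of the
Ueno-Campana threefold) equals the subfield `k(b₂, b₃, a₂, a₃)` generated over `k` by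
`b₂ = x₂/x₁`, `b₃ = x₃/x₁`, `a₂ = y₂/y₁`, `a₃ = y₃/y₁`. -/
theorem fixed_field_eq_k_b2_b3_a2_a3 (h2 : (2 : k) ≠ 0) (ζ : k) (hζ : ζ ^ 2 = -1)
    (hne : ∀ i : Fin 6, xv k i ≠ 0)
    (g : UenoField k ≃ₐ[k] UenoField k)
    (hgx1 : g (x1 k) = -x1 k) (hgx2 : g (x2 k) = -x2 k) (hgx3 : g (x3 k) = -x3 k)
    (hgy1 : g (y1 k) = algebraMap k (UenoField k) ζ * y1 k)
    (hgy2 : g (y2 k) = algebraMap k (UenoField k) ζ * y2 k)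
    (hgy3 : g (y3 k) = algebraMap k (UenoField k) ζ * y3 k) :
    ∀ f : UenoField k,
      g f = f ↔
        f ∈ IntermediateField.adjoin k
          ({b2 k, b3 k, a2 k, a3 k} : Set (UenoField k)) := by
  intro f
  set F := adjoin k ({b2 k, b3 k, a2 k, a3 k} : Set (UenoField k))
  obtain ⟨hb2, hb3, ha2, ha3⟩ : b2 k ∈ F ∧ b3 k ∈ F ∧ a2 k ∈ F ∧ a3 k ∈ F := by
    refine ⟨?_, ?_, ?_, ?_⟩ <;> exact subset_adjoin _ _ (by simp)
  have hx1sq : x1 k ^ 2 ∈ F := by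
    rw [Ueno.x1_sq_eq (hne 0) (hne 1) (hne 2)]
    exact div_mem (sub_mem (pow_mem ha2 2) hb2) (sub_mem (pow_mem ha2 2) (pow_mem hb2 3))
  have hy1_pow : y1 k ^ 4 = algebraMap F (UenoField k)
      ⟨x1 k ^ 2 * (x1 k ^ 2 - 1) ^ 2, mul_mem hx1sq (pow_mem (sub_mem hx1sq (one_mem F)) 2)⟩ :=
    Ueno.y1_pow_four k
  have htop := Ueno.adjoin_y1_eq_top F hb2 hb3 ha2 ha3 hx1sq (hne 0) (hne 1)
  have := finiteDimensional_of_adjoin_simple_eq_top four_ne_zero hy1_pow htop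
  rw [← mem_fixedField_zpowers_iff, ← eq_fixedField_zpowers F g
    (Ueno.adjoin_le_fixedField_zpowers hζ hgx1 hgx2 hgx3 hgy1 hgy2 hgy3)
    ((finrank_le_of_adjoin_simple_eq_top four_ne_zero hy1_pow htop).trans
      (Ueno.orderOf_eq_four h2 hζ (hne 1) hgx1 hgx2 hgx3 hgy1 hgy2 hgy3).ge)]
end
end
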